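/- Let (Ш, →, ↠, ↪) be a two-acyclic factorization system and let X be a closed set. Then Del(X,c) is covered by X in the lattice of closed sets for every c ∈ Cov(X), and every element covered by X in the lattice of closed sets equals Del(X,c) for a unique c ∈ Cov(X). -/

import Mathlib

namespace SDL

variable {S : Type*} {L : Type*}

/-- `X^⊥ = {y | x ↛ y for all x ∈ X}` -/
def perpR (r : S → S → Prop) (X : Set S) : Set S := {y | ∀ x ∈ X, ¬ r x y}

/-- `^⊥Y = {x | x ↛ y for all y ∈ Y}` -/
def perpL (r : S → S → Prop) (Y : Set S) : Set S := {x | ∀ y ∈ Y, ¬ r x y}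

/-- `(X, Y)` is a maximal orthogonal pair for `r`. -/
def IsMOP (r : S → S → Prop) (X Y : Set S) : Prop := Y = perpR r X ∧ X = perpL r Y

/-- The set of maximal orthogonal pairs. -/
def Pairs (r : S → S → Prop) : Type _ := {p : Set S × Set S // IsMOP r p.1 p.2}

/-- `Pairs r` is ordered by containment in the first component. -/
instance (r : S → S → Prop) : PartialOrder (Pairs r) where
  le p q := p.val.1 ⊆ q.val.1
  le_refl _ := Set.Subset.rfl
  le_trans _ _ _ h h' := Set.Subset.trans h h'
  le_antisymm p q h h' := by
    apply Subtype.ext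
    have h1 : p.val.1 = q.val.1 := subset_antisymm h h'
    have h2 : p.val.2 = q.val.2 := by rw [p.prop.1, q.prop.1, h1]
    exact Prod.ext h1 h2

/-- `x ↠ y` iff for all `z`, `y → z` implies `x → z`. -/
def Onto (r : S → S → Prop) (x y : S) : Prop := ∀ z, r y z → r x z

/-- `x ↪ y` iff for all `z`, `z → x` implies `z → y`. -/
def Into (r : S → S → Prop) (x y : S) : Prop := ∀ z, r z x → r z y

/-- `Mult ↠ ↪` relates `x` to `z` iff `x ↠ y ↪ z` for some `y`. -/
def Mult (ont inj : S → S → Prop) (x z : S) : Prop := ∃ y, ont x y ∧ inj y z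

/-- `(S, r, ont, inj)` is a factorization system. -/
structure IsFactSystem (r ont inj : S → S → Prop) : Prop where
  refl : ∀ x, r x x
  onto_iff : ∀ x y, ont x y ↔ Onto r x y
  into_iff : ∀ x y, inj x y ↔ Into r x y
  mult_iff : ∀ x z, r x z ↔ Mult ont inj x z

/-- A two-acyclic factorization system. -/
structure IsTwoAcyclicFS (r ont inj : S → S → Prop) extends IsFactSystem r ont inj : Prop where
  onto_antisymm : ∀ x y, ont x y → ont y x → x = y
  into_antisymm : ∀ x y, inj x y → inj y x → x = y
  brick : ∀ x y, ont x y → inj y x → x = y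

/-- `T(x) = {x' | x ↠ x'}`. -/
def Tset (ont : S → S → Prop) (x : S) : Set S := {x' | ont x x'}

/-- `F(x) = {x' | x' ↪ x}`. -/
def Fset (inj : S → S → Prop) (x : S) : Set S := {x' | inj x' x}

/-- Restriction of a relation to a subset. -/
def restrictRel (r : S → S → Prop) (D : Set S) : D → D → Prop := fun a b => r a b

/-- A subset is closed if it equals its closure `^⊥(X^⊥)`. -/
def IsClosedSet (r : S → S → Prop) (X : Set S) : Prop := perpL r (perpR r X) = X

/-- The lattice of closed sets, ordered by containment. -/
abbrev Closeds (r : S → S → Prop) : Type _ := {X : Set S // IsClosedSet r X}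

/-- `Del(X, c) = X \ {x ∈ X : x ↠ c}`. -/
def Del (ont : S → S → Prop) (X : Set S) (c : S) : Set S := X \ {x | ont x c}

/-- `Cov(X)`: those `c ∈ X` with `Del(X,c)` closed and the closure of `Del(X,c) ∪ {c}` equal
to `X`. -/
def CovS (r ont : S → S → Prop) (X : Set S) : Set S :=
  {c | c ∈ X ∧ IsClosedSet r (Del ont X c) ∧ perpL r (perpR r (Del ont X c ∪ {c})) = X}

/-- Direct forcing: `x ⇝ y` iff `x` is `↠`-minimal in `F(y)` or `↪`-maximal in `T(y)`. -/
def Forces (ont inj : S → S → Prop) (x y : S) : Prop :=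
  (inj x y ∧ ∀ x', inj x' y → ont x x' → x' = x) ∨
  (ont y x ∧ ∀ x', ont y x' → inj x' x → x' = x)

/-- `down X` for a partial order given as a relation (`r x y` meaning `x ≥ y`). -/
def dnRel (r : S → S → Prop) (X : Set S) : Set S := {y | ∃ x ∈ X, r x y}

/-- `up X` for a partial order given as a relation (`r x y` meaning `x ≥ y`). -/
def upRel (r : S → S → Prop) (X : Set S) : Set S := {y | ∃ x ∈ X, r y x}

section OrderNotions

variable [PartialOrder L]

/-- Completely join-irreducible: there is `j⁎` such that `x < j ↔ x ≤ j⁎`. -/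
def CJIrr (j : L) : Prop := ∃ j', ∀ x : L, x < j ↔ x ≤ j'

/-- Completely meet-irreducible: there is `j^*` such that `x > m ↔ x ≥ m^*`. -/
def CMIrr (m : L) : Prop := ∃ m', ∀ x : L, m < x ↔ m' ≤ x

/-- `k = κ(j)`: `k` is the greatest element of `{y | j ⊓ y = j⁎}`. -/
def IsKappa (j k : L) : Prop :=
  ∃ j', (∀ x : L, x < j ↔ x ≤ j') ∧ IsGreatest {y : L | IsGLB ({j, y} : Set L) j'} k

/-- `k = κᵈ(m)`: `k` is the least element of `{x | m ⊔ x = m^*}`. -/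
def IsKappad (m k : L) : Prop :=
  ∃ m', (∀ x : L, m < x ↔ m' ≤ x) ∧ IsLeast {x : L | IsLUB ({m, x} : Set L) m'} k

/-- `L` is a κ-lattice: complete, meet and join generated by irreducibles, with inverse
bijections `κ` and `κᵈ` between the completely join- and meet-irreducibles. -/
def IsKappaLattice (L : Type*) [PartialOrder L] : Prop :=
  (∀ s : Set L, ∃ a, IsLUB s a) ∧
  (∀ s : Set L, ∃ a, IsGLB s a) ∧
  (∀ x : L, IsLUB {j : L | CJIrr j ∧ j ≤ x} x) ∧
  (∀ x : L, IsGLB {m : L | CMIrr m ∧ x ≤ m} x) ∧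
  (∀ j : L, CJIrr j → ∃ k, IsKappa j k ∧ CMIrr k ∧ IsKappad k j) ∧
  (∀ m : L, CMIrr m → ∃ k, IsKappad m k ∧ CJIrr k ∧ IsKappa k m)

/-- Well separated: `z₁ ≰ z₂` implies some completely join-irreducible `j` has `j ≤ z₁` and
`κ(j) ≥ z₂`. -/
def WellSeparated (L : Type*) [PartialOrder L] : Prop :=
  ∀ z₁ z₂ : L, ¬ z₁ ≤ z₂ → ∃ j k : L, CJIrr j ∧ IsKappa j k ∧ j ≤ z₁ ∧ z₂ ≤ k

/-- The set of completely join-irreducible elements, as a type. -/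
abbrev JIrrC (L : Type*) [PartialOrder L] : Type _ := {j : L // CJIrr j}

/-- `i →_L j` iff `i ≰ κ(j)`. -/
def toL (i j : JIrrC L) : Prop := ∃ k : L, IsKappa (j : L) k ∧ ¬ (i : L) ≤ k

/-- `i ↠_L j` iff `i ≥ j` in `L`. -/
def ontoL (i j : JIrrC L) : Prop := (j : L) ≤ (i : L)

/-- `i ↪_L j` iff `κ(i) ≥ κ(j)` in `L`. -/
def intoL (i j : JIrrC L) : Prop :=
  ∃ ki kj : L, IsKappa (i : L) ki ∧ IsKappa (j : L) kj ∧ kj ≤ ki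

/-- A poset is a semidistributive lattice (order-theoretically): binary joins and meets exist,
and both semidistributive laws hold. -/
def IsSDLattice (L : Type*) [PartialOrder L] : Prop :=
  (∀ x y : L, ∃ s, IsLUB ({x, y} : Set L) s) ∧
  (∀ x y : L, ∃ s, IsGLB ({x, y} : Set L) s) ∧
  (∀ x y z sxy sxz myz : L, IsLUB ({x, y} : Set L) sxy → IsLUB ({x, z} : Set L) sxz →
    sxy = sxz → IsGLB ({y, z} : Set L) myz → IsLUB ({x, myz} : Set L) sxy) ∧
  (∀ x y z mxy mxz syz : L, IsGLB ({x, y} : Set L) mxy → IsGLB ({x, z} : Set L) mxz →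
    mxy = mxz → IsLUB ({y, z} : Set L) syz → IsGLB ({x, syz} : Set L) mxy)

/-- `s` is the canonical join representation of `x`. -/
def IsCanonicalJoinRep (s : Set L) (x : L) : Prop :=
  IsLUB s x ∧ (∀ s' : Set L, IsLUB s' x → ∀ a ∈ s, ∃ b ∈ s', a ≤ b) ∧
  IsAntichain (· ≤ ·) s

end OrderNotions

/-- Join semidistributivity. -/
def JoinSD (L : Type*) [Lattice L] : Prop :=
  ∀ x y z : L, x ⊔ y = x ⊔ z → x ⊔ (y ⊓ z) = x ⊔ y

/-- Meet semidistributivity. -/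
def MeetSD (L : Type*) [Lattice L] : Prop :=
  ∀ x y z : L, x ⊓ y = x ⊓ z → x ⊓ (y ⊔ z) = x ⊓ y

/-- Complete join semidistributivity. -/
def CompletelyJoinSD (L : Type*) [CompleteLattice L] : Prop :=
  ∀ (X : Set L) (y z : L), X.Nonempty → (∀ x ∈ X, x ⊔ y = z) → sInf X ⊔ y = z

/-- Complete meet semidistributivity. -/
def CompletelyMeetSD (L : Type*) [CompleteLattice L] : Prop :=
  ∀ (X : Set L) (y z : L), X.Nonempty → (∀ x ∈ X, x ⊓ y = z) → sSup X ⊓ y = z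

end SDL

/-!
If `Y ⋖ X` in the lattice of closed sets, every `x ∈ X \ Y` relates to every `y ∈ Y^⊥ \ X^⊥`:
otherwise `X ∩ ^⊥{y}` would be a closed set strictly between `Y` and `X`. Factoring these
relations, two-acyclicity forces `X ∩ Y^⊥` to be a single element `b`, and every `x ∈ X \ Y`
satisfies `x ↠ b`, so that `Y = Del(X, b)`. Conversely, closed sets are closed under `↠`, so a
closed set strictly above `Del(X, c)` inside `X` contains `c`, hence the closure of
`Del(X, c) ∪ {c}`.
-/

namespace SDL

section Polarity

variable {S : Type*} {r : S → S → Prop}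

lemma perpL_anti {V W : Set S} (hVW : V ⊆ W) : perpL r W ⊆ perpL r V :=
  fun _ hx y hy => hx y (hVW hy)

lemma perpR_anti {V W : Set S} (hVW : V ⊆ W) : perpR r W ⊆ perpR r V :=
  fun _ hx y hy => hx y (hVW hy)

lemma subset_perpL_perpR (W : Set S) : W ⊆ perpL r (perpR r W) :=
  fun x hx _ hy => hy x hx

lemma subset_perpR_perpL (W : Set S) : W ⊆ perpR r (perpL r W) :=
  fun y hy _ hx => hx y hy

lemma isClosedSet_perpL (W : Set S) : IsClosedSet r (perpL r W) :=
  (perpL_anti (subset_perpR_perpL W)).antisymm (subset_perpL_perpR _)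

lemma perpL_perpR_subset {W X : Set S} (hX : IsClosedSet r X) (hWX : W ⊆ X) :
    perpL r (perpR r W) ⊆ X :=
  hX ▸ perpL_anti (perpR_anti hWX)

lemma IsClosedSet.inter {A B : Set S} (hA : IsClosedSet r A) (hB : IsClosedSet r B) :
    IsClosedSet r (A ∩ B) :=
  (Set.subset_inter (perpL_perpR_subset hA Set.inter_subset_left)
    (perpL_perpR_subset hB Set.inter_subset_right)).antisymm (subset_perpL_perpR _)

lemma exists_perpR_rel_of_notMem {Y : Set S} (hY : IsClosedSet r Y) {x : S} (hx : x ∉ Y) :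
    ∃ y ∈ perpR r Y, r x y := by
  by_contra! hxY
  exact hx (hY ▸ hxY)

lemma rel_of_covBy {X Y : Closeds r} (hYX : Y ⋖ X) {x y : S} (hx : x ∈ X.val \ Y.val)
    (hy : y ∈ perpR r Y.val \ perpR r X.val) : r x y := by
  by_contra hxy
  let Z : Closeds r := ⟨X.val ∩ perpL r {y}, X.prop.inter (isClosedSet_perpL _)⟩
  have hYZ : Y ≤ Z := fun u hu => ⟨hYX.le hu, by simpa [perpL] using hy.1 u hu⟩
  have hxZ : x ∈ Z.val := ⟨hx.1, by simpa [perpL] using hxy⟩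
  rcases hYX.eq_or_eq hYZ (fun _ hu => hu.1) with hZY | hZX
  · exact hx.2 (hZY ▸ hxZ)
  · exact hy.2 fun u hu => (hZX ▸ hu : u ∈ Z.val).2 y rfl

lemma mem_diff_of_mem_inter_perpR (hr : ∀ x, r x x) {X Y : Set S} {b : S}
    (hb : b ∈ X ∩ perpR r Y) : b ∈ X \ Y ∧ b ∈ perpR r Y \ perpR r X :=
  ⟨⟨hb.1, fun hbY => hb.2 b hbY (hr b)⟩, ⟨hb.2, fun hbX => hbX b hb.1 (hr b)⟩⟩

end Polarity

section Factorization

variable {S : Type*} {r ont inj : S → S → Prop}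

lemma notMem_del_self {X : Set S} {c : S} (hc : ont c c) : c ∉ Del ont X c :=
  fun h => h.2 hc

lemma eq_of_del_eq (hrefl : ∀ x, ont x x) (hanti : ∀ x y, ont x y → ont y x → x = y)
    {X : Set S} {c c' : S} (hc : c ∈ X) (hc' : c' ∈ X) (hdel : Del ont X c = Del ont X c') :
    c = c' := by
  have hcc' : ont c c' := by
    by_contra h
    exact notMem_del_self (hrefl c) (by rw [hdel]; exact ⟨hc, h⟩)
  have hc'c : ont c' c := by
    by_contra h
    exact notMem_del_self (hrefl c') (by rw [← hdel]; exact ⟨hc', h⟩)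
  exact hanti c c' hcc' hc'c

namespace IsFactSystem

variable (h : IsFactSystem r ont inj)
include h

lemma onto_refl (x : S) : ont x x :=
  (h.onto_iff x x).2 fun _ hz => hz

lemma onto_trans {x y z : S} (hxy : ont x y) (hyz : ont y z) : ont x z :=
  (h.onto_iff x z).2 fun w hw => (h.onto_iff x y).1 hxy w ((h.onto_iff y z).1 hyz w hw)

lemma mem_perpL_of_onto {W : Set S} {x y : S} (hx : x ∈ perpL r W) (hxy : ont x y) :
    y ∈ perpL r W :=
  fun w hw hyw => hx w hw ((h.onto_iff x y).1 hxy w hyw)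

lemma mem_perpR_of_into {W : Set S} {x y : S} (hy : y ∈ perpR r W) (hxy : inj x y) :
    x ∈ perpR r W :=
  fun w hw hwx => hy w hw ((h.into_iff x y).1 hxy w hwx)

lemma mem_of_onto {Z : Set S} (hZ : IsClosedSet r Z) {x y : S} (hx : x ∈ Z) (hxy : ont x y) :
    y ∈ Z :=
  hZ ▸ h.mem_perpL_of_onto (hZ.symm ▸ hx) hxy

lemma exists_onto_into_mem_inter_perpR {X Y : Closeds r} {x y : S} (hx : x ∈ X.val)
    (hy : y ∈ perpR r Y.val) (hxy : r x y) :
    ∃ m ∈ X.val ∩ perpR r Y.val, ont x m ∧ inj m y := by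
  obtain ⟨m, hxm, hmy⟩ := (h.mult_iff x y).1 hxy
  exact ⟨m, ⟨h.mem_of_onto X.prop hx hxm, h.mem_perpR_of_into hy hmy⟩, hxm, hmy⟩

lemma nonempty_inter_perpR {X Y : Closeds r} (hYX : Y < X) :
    (X.val ∩ perpR r Y.val).Nonempty := by
  obtain ⟨x, hxX, hxY⟩ := Set.exists_of_ssubset (Subtype.coe_lt_coe.2 hYX)
  obtain ⟨y, hy, hxy⟩ := exists_perpR_rel_of_notMem Y.prop hxY
  obtain ⟨m, hm, -⟩ := h.exists_onto_into_mem_inter_perpR hxX hy hxy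
  exact ⟨m, hm⟩

lemma covBy_of_mem_covS {X Y : Closeds r} {c : S} (hc : c ∈ CovS r ont X.val)
    (hY : Y.val = Del ont X.val c) : Y ⋖ X := by
  obtain ⟨hcX, -, hclosure⟩ := hc
  have hcY : c ∉ Y.val := hY ▸ notMem_del_self (h.onto_refl c)
  have hYX : Y ≤ X := fun u hu => (hY ▸ hu : u ∈ Del ont X.val c).1
  refine ⟨lt_of_le_of_ne hYX fun hYX => hcY (hYX ▸ hcX), fun Z hYZ hZX => hZX.not_ge ?_⟩
  obtain ⟨z, hzZ, hzY⟩ := Set.exists_of_ssubset (Subtype.coe_lt_coe.2 hYZ)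
  have hzc : ont z c := by
    by_contra hzc
    exact hzY (hY ▸ ⟨hZX.le hzZ, hzc⟩)
  have hcZ : c ∈ Z.val := h.mem_of_onto Z.prop hzZ hzc
  show X.val ⊆ Z.val
  rw [← hclosure]
  exact perpL_perpR_subset Z.prop
    (Set.union_subset (hY ▸ hYZ.le) (Set.singleton_subset_iff.2 hcZ))

lemma mem_covS_of_covBy {X Y : Closeds r} (hYX : Y ⋖ X) {b : S} (hb : b ∈ X.val)
    (hY : Y.val = Del ont X.val b) : b ∈ CovS r ont X.val := by
  refine ⟨hb, hY ▸ Y.prop, ?_⟩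
  let Z : Closeds r := ⟨perpL r (perpR r (Del ont X.val b ∪ {b})), isClosedSet_perpL _⟩
  have hYZ : Y ≤ Z := fun u hu => subset_perpL_perpR _ (Or.inl (hY ▸ hu))
  have hbZ : b ∈ Z.val := subset_perpL_perpR _ (Or.inr rfl)
  have hZX : Z ≤ X := perpL_perpR_subset X.prop
    (Set.union_subset Set.sdiff_subset (Set.singleton_subset_iff.2 hb))
  rcases hYX.eq_or_eq hYZ hZX with hZY | hZX
  · exact absurd (hZY ▸ hbZ) (hY ▸ notMem_del_self (h.onto_refl b))
  · exact congrArg Subtype.val hZX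

end IsFactSystem

namespace IsTwoAcyclicFS

variable (h : IsTwoAcyclicFS r ont inj) {X Y : Closeds r} (hYX : Y ⋖ X)
include h hYX

lemma into_of_mem_inter_perpR {b m : S} (hb : b ∈ X.val ∩ perpR r Y.val)
    (hm : m ∈ X.val ∩ perpR r Y.val) : inj b m := by
  have hB {z : S} (hz : z ∈ X.val ∩ perpR r Y.val) := mem_diff_of_mem_inter_perpR h.refl hz
  obtain ⟨p, hp, hbp, hpm⟩ := h.exists_onto_into_mem_inter_perpR hb.1 hm.2
    (rel_of_covBy hYX (hB hb).1 (hB hm).2)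
  obtain ⟨s, hps, hsb⟩ := (h.mult_iff p b).1 (rel_of_covBy hYX (hB hp).1 (hB hb).2)
  -- `b ↠ p ↠ s ↪ b`, so the brick condition collapses `s` onto `b`, and then `p ↠ b`
  have hbs : b = s := h.brick b s (h.onto_trans hbp hps) hsb
  have hbp_eq : b = p := h.onto_antisymm b p hbp (hbs ▸ hps)
  exact hbp_eq ▸ hpm

lemma subsingleton_inter_perpR : (X.val ∩ perpR r Y.val).Subsingleton :=
  fun _ hb _ hm => h.into_antisymm _ _
    (h.into_of_mem_inter_perpR hYX hb hm) (h.into_of_mem_inter_perpR hYX hm hb)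

lemma eq_del_of_covBy {b : S} (hb : b ∈ X.val ∩ perpR r Y.val) :
    Y.val = Del ont X.val b := by
  have hB := mem_diff_of_mem_inter_perpR h.refl hb
  ext x
  refine ⟨fun hx => ⟨hYX.le hx, fun hxb => hB.1.2 (h.mem_of_onto Y.prop hx hxb)⟩, ?_⟩
  rintro ⟨hxX, hxb⟩
  by_contra hxY
  obtain ⟨m, hm, hxm, -⟩ :=
    h.exists_onto_into_mem_inter_perpR hxX hb.2 (rel_of_covBy hYX ⟨hxX, hxY⟩ hB.2)
  exact hxb (h.subsingleton_inter_perpR hYX hm hb ▸ hxm)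

end IsTwoAcyclicFS

end Factorization

/-- Theorem 5.1: for a closed set `X`, the sets `Del(X, c)` for `c ∈ Cov(X)` are exactly the
elements covered by `X` in the lattice of closed sets, each arising for a unique `c`. -/
theorem covers_of_closed (S : Type u) (r ont inj : S → S → Prop)
    (h : IsTwoAcyclicFS r ont inj) (X : Closeds r) :
    (∀ c ∈ CovS r ont X.val, ∀ Y : Closeds r, Y.val = Del ont X.val c → Y ⋖ X) ∧
    (∀ Y : Closeds r, Y ⋖ X → ∃! c : S, c ∈ CovS r ont X.val ∧ Y.val = Del ont X.val c) := by
  refine ⟨fun c hc Y hY => h.covBy_of_mem_covS hc hY, fun Y hYX => ?_⟩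
  obtain ⟨b, hb⟩ := h.nonempty_inter_perpR hYX.lt
  have hYb : Y.val = Del ont X.val b := h.eq_del_of_covBy hYX hb
  refine ⟨b, ⟨h.mem_covS_of_covBy hYX hb.1 hYb, hYb⟩, fun c ⟨hc, hYc⟩ => ?_⟩
  exact eq_of_del_eq h.onto_refl h.onto_antisymm hc.1 hb.1 (hYc ▸ hYb)

end SDL
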